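/- Let M be a pointed metric space such that the pair (M, ℝ) has the Lip-BPB property in molecular form, let ρ ∈ [0,1), and let Y be a real Banach space having ACK structure with parameter ρ witnessed by a 1-norming set Γ ⊆ B_{Y*}. Then for every ε > 0 there exists η > 0 such that: for every Γ-flat map T ∈ Lip₀(M, Y) with ‖T‖_L = 1 and all distinct points p, q ∈ M with ‖T(p) − T(q)‖ > (1 − η) d(p,q), there exist S ∈ Lip₀(M, Y) with ‖S‖_L = 1 and distinct points r, s ∈ M such that ‖S(r) − S(s)‖ = d(r,s), ρ((p,q),(r,s)) < ε, and ‖T − S‖_L < ε. -/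

import Mathlib

open Set Metric NNReal MeasureTheory

/-- A Lipschitz map vanishing at the base point `z`, i.e. an element of `Lip₀(M,Y)`. -/
def IsLip0 {M Y : Type*} [MetricSpace M] [NormedAddCommGroup Y]
    (z : M) (F : M → Y) : Prop :=
  (∃ K : ℝ≥0, LipschitzWith K F) ∧ F z = 0

/-- The Lipschitz norm `‖F‖_L = sup {‖F p - F q‖ / d(p,q) : p ≠ q}`. -/
noncomputable def lipNorm {M Y : Type*} [MetricSpace M] [NormedAddCommGroup Y]
    (F : M → Y) : ℝ :=
  sSup {r : ℝ | ∃ p q : M, p ≠ q ∧ r = ‖F p - F q‖ / dist p q}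

/-- `F` strongly attains its norm. -/
def StronglyAttains {M Y : Type*} [MetricSpace M] [NormedAddCommGroup Y]
    (F : M → Y) : Prop :=
  ∃ p q : M, p ≠ q ∧ ‖F p - F q‖ = lipNorm F * dist p q

/-- `F` is Lipschitz compact: its Lipschitz image is relatively compact. -/
def IsLipCompact {M Y : Type*} [MetricSpace M] [NormedAddCommGroup Y] [NormedSpace ℝ Y]
    (F : M → Y) : Prop :=
  IsCompact (closure {y : Y | ∃ p q : M, p ≠ q ∧ y = (dist p q)⁻¹ • (F p - F q)})

/-- The pair `(M,Y)` has the Lip-BPB property witnessed by the function `η`. -/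
def LipBPBWith (M : Type*) [MetricSpace M] (z : M)
    (Y : Type*) [NormedAddCommGroup Y] (η : ℝ → ℝ) : Prop :=
  (∀ ε > 0, η ε > 0) ∧
  ∀ ε > 0, ∀ F : M → Y, IsLip0 z F → lipNorm F = 1 →
    ∀ p q : M, p ≠ q → ‖F p - F q‖ > (1 - η ε) * dist p q →
      ∃ G : M → Y, IsLip0 z G ∧ ∃ r s : M, r ≠ s ∧
        ‖G r - G s‖ = dist r s ∧ lipNorm G = 1 ∧
        lipNorm (fun x => G x - F x) < ε ∧
        (dist p r + dist q s) / dist p q < ε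

/-- The pair `(M,Y)` has the Lip-BPB property. -/
def LipBPB (M : Type*) [MetricSpace M] (z : M)
    (Y : Type*) [NormedAddCommGroup Y] : Prop :=
  ∃ η : ℝ → ℝ, LipBPBWith M z Y η

/-- The pair `(M,Y)` has the Lip-BPB property for Lipschitz compact maps
witnessed by the function `η`. -/
def LipBPBCompactWith (M : Type*) [MetricSpace M] (z : M)
    (Y : Type*) [NormedAddCommGroup Y] [NormedSpace ℝ Y] (η : ℝ → ℝ) : Prop :=
  (∀ ε > 0, η ε > 0) ∧
  ∀ ε > 0, ∀ F : M → Y, IsLip0 z F → IsLipCompact F → lipNorm F = 1 →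
    ∀ p q : M, p ≠ q → ‖F p - F q‖ > (1 - η ε) * dist p q →
      ∃ G : M → Y, IsLip0 z G ∧ IsLipCompact G ∧ ∃ r s : M, r ≠ s ∧
        ‖G r - G s‖ = dist r s ∧ lipNorm G = 1 ∧
        lipNorm (fun x => G x - F x) < ε ∧
        (dist p r + dist q s) / dist p q < ε

/-- The pair `(M,Y)` has the Lip-BPB property for Lipschitz compact maps. -/
def LipBPBCompact (M : Type*) [MetricSpace M] (z : M)
    (Y : Type*) [NormedAddCommGroup Y] [NormedSpace ℝ Y] : Prop :=
  ∃ η : ℝ → ℝ, LipBPBCompactWith M z Y η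

/-- `SA(M,Y)` is dense in `Lip₀(M,Y)`. -/
def SADense (M : Type*) [MetricSpace M] (z : M)
    (Y : Type*) [NormedAddCommGroup Y] : Prop :=
  ∀ F : M → Y, IsLip0 z F → ∀ ε > 0,
    ∃ G : M → Y, IsLip0 z G ∧ StronglyAttains G ∧ lipNorm (fun x => G x - F x) < ε

/-- `SA_K(M,Y)` is dense in `Lipc(M,Y)`. -/
def SAKDense (M : Type*) [MetricSpace M] (z : M)
    (Y : Type*) [NormedAddCommGroup Y] [NormedSpace ℝ Y] : Prop :=
  ∀ F : M → Y, IsLip0 z F → IsLipCompact F → ∀ ε > 0,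
    ∃ G : M → Y, IsLip0 z G ∧ IsLipCompact G ∧ StronglyAttains G ∧
      lipNorm (fun x => G x - F x) < ε

/-- The molecule distance `ρ((p,q),(r,s))`: the distance in the Lipschitz-free space between
the molecules determined by the pairs `(p,q)` and `(r,s)`. -/
noncomputable def molDist {M : Type*} [MetricSpace M] (z : M) (p q r s : M) : ℝ :=
  sSup {t : ℝ | ∃ f : M → ℝ, IsLip0 z f ∧ lipNorm f ≤ 1 ∧
    t = |(f p - f q) / dist p q - (f r - f s) / dist r s|}

/-- The pair `(M,ℝ)` has the Lip-BPB property in molecular form witnessed by `η`. -/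
def LipBPBMolWith {M : Type*} [MetricSpace M] (z : M) (η : ℝ → ℝ) : Prop :=
  (∀ ε > 0, η ε > 0) ∧
  ∀ ε > 0, ∀ f : M → ℝ, IsLip0 z f → lipNorm f = 1 →
    ∀ p q : M, p ≠ q → |f p - f q| > (1 - η ε) * dist p q →
      ∃ g : M → ℝ, IsLip0 z g ∧ lipNorm g = 1 ∧
        ∃ r s : M, r ≠ s ∧ |g r - g s| = dist r s ∧
          lipNorm (fun x => f x - g x) < ε ∧ molDist z p q r s < ε

/-- A set of functionals on `Y` is weak-star open. -/
def IsWeakStarOpen {Y : Type*} [NormedAddCommGroup Y] [NormedSpace ℝ Y]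
    (U : Set (Y →L[ℝ] ℝ)) : Prop :=
  IsOpen (X := WeakDual ℝ Y) (StrongDual.toWeakDual '' U)

/-- `Γ ⊆ B_{Y*}` is a 1-norming set. -/
def IsOneNorming {Y : Type*} [NormedAddCommGroup Y] [NormedSpace ℝ Y]
    (Γ : Set (Y →L[ℝ] ℝ)) : Prop :=
  (∀ φ ∈ Γ, ‖φ‖ ≤ 1) ∧ ∀ y : Y, ‖y‖ = sSup {t : ℝ | ∃ φ ∈ Γ, t = |φ y|}

/-- `Y` has ACK structure with parameter `ρ`, witnessed by the 1-norming set `Γ`. -/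
def ACKWith (Y : Type*) [NormedAddCommGroup Y] [NormedSpace ℝ Y]
    (ρ : ℝ) (Γ : Set (Y →L[ℝ] ℝ)) : Prop :=
  IsOneNorming Γ ∧
  ∀ ε > (0 : ℝ), ∀ U : Set (Y →L[ℝ] ℝ), U.Nonempty → U ⊆ Γ →
    (∃ W : Set (Y →L[ℝ] ℝ), IsWeakStarOpen W ∧ U = W ∩ Γ) →
    ∃ V ⊆ U, V.Nonempty ∧ ∃ y₁ ∈ V, ∃ e : Y, ‖e‖ = 1 ∧ ∃ F : Y →L[ℝ] Y,
      ‖F e‖ = 1 ∧ ‖F‖ = 1 ∧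
      y₁ (F e) = 1 ∧
      y₁.comp F = y₁ ∧
      (∀ φ ∈ Γ, φ ∉ {ψ ∈ Γ | ‖ψ.comp F‖ + (1 - ε) * ‖ψ - ψ.comp F‖ ≤ 1} →
        |φ (F e)| ≤ ρ) ∧
      (∀ φ ∈ Γ, ∃ (n : ℕ) (v : Fin n → (Y →L[ℝ] ℝ)) (c : Fin n → ℝ),
        (∀ k, v k ∈ V) ∧ (∑ k, |c k|) ≤ 1 ∧
        ‖φ.comp F - ∑ k, c k • v k‖ < ε) ∧
      (∀ φ ∈ V, |φ e - 1| ≤ ε)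

/-- `Y` has ACK structure with parameter `ρ`. -/
def HasACK (Y : Type*) [NormedAddCommGroup Y] [NormedSpace ℝ Y] (ρ : ℝ) : Prop :=
  ∃ Γ : Set (Y →L[ℝ] ℝ), ACKWith Y ρ Γ

/-- `T : M → Y` is a `Γ`-flat map. -/
def IsGammaFlat {M Y : Type*} [MetricSpace M] [NormedAddCommGroup Y] [NormedSpace ℝ Y]
    (Γ : Set (Y →L[ℝ] ℝ)) (T : M → Y) : Prop :=
  ∀ U : Set (Y →L[ℝ] ℝ), IsWeakStarOpen U → (U ∩ Γ).Nonempty → ∀ δ > (0 : ℝ),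
    ∃ V : Set (Y →L[ℝ] ℝ), IsWeakStarOpen V ∧ V ⊆ U ∧ (V ∩ Γ).Nonempty ∧
      ∀ φ ∈ V ∩ Γ, ∀ ψ ∈ V ∩ Γ, lipNorm (fun x => φ (T x) - ψ (T x)) < δ

/-! Let `T` almost attain its norm at `(p, q)`. Flatness gives a weak-star slice of `Γ` on which
every `y` almost norms `T p - T q` and all `y ∘ T` are `B`-close, and ACK structure on that slice
gives `V, y₁, e, F`. The molecular Lip-BPB property applied to `y₁ ∘ T` gives `g` attaining its
norm at `(r, s)` with `ρ((p,q),(r,s))` small, and `S = g ⊗ F e + (1 - ε)(T - F ∘ T)` satisfies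
`y₁ ∘ S = g`, so `S` attains its norm at `(r, s)`. Against `φ ∈ Γ`, the increments of `S` are
bounded by `‖φ ∘ F‖ + (1 - ε)‖φ - φ ∘ F‖ ≤ 1` when `φ ∈ V₁`; otherwise `|φ (F e)| ≤ ρ < 1`, and
conditions (5), (6) together with flatness make `φ ∘ F` act on increments of `T` as a multiple
of `y₁`, which leaves room for the factor `1 - ε`. -/

section LipNorm

open scoped Pointwise

variable {M Y : Type*} [MetricSpace M] [NormedAddCommGroup Y]

theorem lipNorm_le_of_forall {F : M → Y} {C : ℝ} (hC : 0 ≤ C)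
    (h : ∀ x y, ‖F x - F y‖ ≤ C * dist x y) : lipNorm F ≤ C := by
  refine Real.sSup_le ?_ hC
  rintro r ⟨x, y, hxy, rfl⟩
  rw [div_le_iff₀ (dist_pos.2 hxy)]
  exact h x y

theorem lipNorm_nonneg (F : M → Y) : 0 ≤ lipNorm F := by
  refine Real.sSup_nonneg ?_
  rintro r ⟨x, y, -, rfl⟩
  positivity

theorem norm_sub_le_lipNorm_mul {F : M → Y} {K : ℝ≥0} (hF : LipschitzWith K F) (x y : M) :
    ‖F x - F y‖ ≤ lipNorm F * dist x y := by
  rcases eq_or_ne x y with rfl | hxy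
  · simp
  have hbdd : BddAbove {r : ℝ | ∃ x y : M, x ≠ y ∧ r = ‖F x - F y‖ / dist x y} := by
    refine ⟨K, ?_⟩
    rintro r ⟨a, b, hab, rfl⟩
    rw [div_le_iff₀ (dist_pos.2 hab), ← dist_eq_norm]
    exact hF.dist_le_mul a b
  rw [← div_le_iff₀ (dist_pos.2 hxy)]
  exact le_csSup hbdd ⟨x, y, hxy, rfl⟩

theorem norm_sub_le_of_lipNorm_le {F : M → Y} {K : ℝ≥0} (hF : LipschitzWith K F) {C : ℝ}
    (h : lipNorm F ≤ C) (x y : M) : ‖F x - F y‖ ≤ C * dist x y :=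
  (norm_sub_le_lipNorm_mul hF x y).trans (mul_le_mul_of_nonneg_right h dist_nonneg)

theorem lipNorm_add_le {F G : M → Y} {K K' : ℝ≥0} (hF : LipschitzWith K F)
    (hG : LipschitzWith K' G) : lipNorm (fun x => F x + G x) ≤ lipNorm F + lipNorm G := by
  refine lipNorm_le_of_forall (add_nonneg (lipNorm_nonneg F) (lipNorm_nonneg G)) fun x y => ?_
  calc ‖F x + G x - (F y + G y)‖ = ‖(F x - F y) + (G x - G y)‖ := by rw [add_sub_add_comm]
    _ ≤ ‖F x - F y‖ + ‖G x - G y‖ := norm_add_le _ _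
    _ ≤ (lipNorm F + lipNorm G) * dist x y := by
      rw [add_mul]
      exact add_le_add (norm_sub_le_lipNorm_mul hF x y) (norm_sub_le_lipNorm_mul hG x y)

theorem lipNorm_const_smul [NormedSpace ℝ Y] (c : ℝ) (F : M → Y) :
    lipNorm (fun x => c • F x) = |c| * lipNorm F := by
  have hset : {r : ℝ | ∃ x y : M, x ≠ y ∧ r = ‖c • F x - c • F y‖ / dist x y} =
      |c| • {r : ℝ | ∃ x y : M, x ≠ y ∧ r = ‖F x - F y‖ / dist x y} := by
    ext r
    simp only [Set.mem_smul_set, smul_eq_mul]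
    constructor
    · rintro ⟨x, y, hxy, rfl⟩
      exact ⟨_, ⟨x, y, hxy, rfl⟩, by rw [← smul_sub, norm_smul, Real.norm_eq_abs, mul_div_assoc]⟩
    · rintro ⟨_, ⟨x, y, hxy, rfl⟩, rfl⟩
      exact ⟨x, y, hxy, by rw [← smul_sub, norm_smul, Real.norm_eq_abs, mul_div_assoc]⟩
  rw [lipNorm, hset, Real.sSup_smul_of_nonneg (abs_nonneg c), smul_eq_mul, lipNorm]

theorem lipNorm_eq_one_of_le_dist {F : M → Y} {K : ℝ≥0} (hF : LipschitzWith K F)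
    (hF1 : lipNorm F ≤ 1) {r s : M} (hrs : r ≠ s) (h : dist r s ≤ ‖F r - F s‖) :
    lipNorm F = 1 := by
  refine hF1.antisymm (le_of_mul_le_mul_right ?_ (dist_pos.2 hrs))
  simpa using h.trans (norm_sub_le_lipNorm_mul hF r s)

theorem abs_sub_sub_sub_le_of_lipNorm_le {f g : M → ℝ} {K K' : ℝ≥0} (hf : LipschitzWith K f)
    (hg : LipschitzWith K' g) {C : ℝ} (h : lipNorm (fun x => f x - g x) ≤ C) (x y : M) :
    |(f x - f y) - (g x - g y)| ≤ C * dist x y := by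
  simpa [sub_sub_sub_comm] using norm_sub_le_of_lipNorm_le (hf.sub hg) h x y

theorem lipNorm_comp_le {Z : Type*} [NormedAddCommGroup Z] [NormedSpace ℝ Y] [NormedSpace ℝ Z]
    (φ : Y →L[ℝ] Z) {T : M → Y} {K : ℝ≥0} (hT : LipschitzWith K T) :
    lipNorm (fun x => φ (T x)) ≤ ‖φ‖ * lipNorm T :=
  lipNorm_le_of_forall (mul_nonneg (norm_nonneg φ) (lipNorm_nonneg T)) fun x y => by
    rw [← map_sub, mul_assoc]
    exact φ.le_opNorm_of_le (norm_sub_le_lipNorm_mul hT x y)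

end LipNorm

section OneNorming

variable {Y : Type*} [NormedAddCommGroup Y] [NormedSpace ℝ Y] {Γ : Set (Y →L[ℝ] ℝ)}

theorem IsOneNorming.abs_apply_le (hΓ : IsOneNorming Γ) {φ : Y →L[ℝ] ℝ} (hφ : φ ∈ Γ) (y : Y) :
    |φ y| ≤ ‖y‖ := by
  simpa using φ.le_of_opNorm_le (hΓ.1 φ hφ) y

theorem IsOneNorming.norm_le_of_forall (hΓ : IsOneNorming Γ) {y : Y} {C : ℝ} (hC : 0 ≤ C)
    (h : ∀ φ ∈ Γ, |φ y| ≤ C) : ‖y‖ ≤ C := by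
  rw [hΓ.2 y]
  refine Real.sSup_le ?_ hC
  rintro t ⟨φ, hφ, rfl⟩
  exact h φ hφ

theorem IsOneNorming.exists_lt_abs_apply (hΓ : IsOneNorming Γ) {y : Y} {c : ℝ} (hc : 0 ≤ c)
    (hcy : c < ‖y‖) : ∃ φ ∈ Γ, c < |φ y| := by
  by_contra! h
  exact (hΓ.norm_le_of_forall hc h).not_gt hcy

theorem IsOneNorming.lipNorm_le {M : Type*} [MetricSpace M] (hΓ : IsOneNorming Γ) {F : M → Y}
    {C : ℝ} (hC : 0 ≤ C) (h : ∀ φ ∈ Γ, ∀ x y, |φ (F x - F y)| ≤ C * dist x y) :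
    lipNorm F ≤ C :=
  lipNorm_le_of_forall hC fun x y =>
    hΓ.norm_le_of_forall (mul_nonneg hC dist_nonneg) fun φ hφ => h φ hφ x y

end OneNorming

theorem isWeakStarOpen_setOf_lt_abs_apply {Y : Type*} [NormedAddCommGroup Y] [NormedSpace ℝ Y]
    (c : ℝ) (y : Y) : IsWeakStarOpen {φ : Y →L[ℝ] ℝ | c < |φ y|} := by
  have : StrongDual.toWeakDual '' {φ : Y →L[ℝ] ℝ | c < |φ y|} = {ψ : WeakDual ℝ Y | c < |ψ y|} := by
    ext ψ
    exact ⟨by rintro ⟨φ, hφ, rfl⟩; exact hφ, fun h => ⟨ψ, h, rfl⟩⟩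
  rw [IsWeakStarOpen, this]
  exact isOpen_lt continuous_const (WeakDual.eval_continuous y).abs

section ACK

variable {Y : Type*} [NormedAddCommGroup Y] [NormedSpace ℝ Y]

/-- The conclusion of `ACKWith` for one slice `V ⊆ Γ` and parameter `μ`. -/
structure IsACKWitness (Γ : Set (Y →L[ℝ] ℝ)) (ρ μ : ℝ) (V : Set (Y →L[ℝ] ℝ))
    (y₁ : Y →L[ℝ] ℝ) (e : Y) (F : Y →L[ℝ] Y) : Prop where
  subset : V ⊆ Γ
  mem : y₁ ∈ V
  norm_e : ‖e‖ = 1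
  norm_apply_e : ‖F e‖ = 1
  apply_apply_e : y₁ (F e) = 1
  comp_eq : y₁.comp F = y₁
  abs_apply_le : ∀ φ ∈ Γ, 1 < ‖φ.comp F‖ + (1 - μ) * ‖φ - φ.comp F‖ → |φ (F e)| ≤ ρ
  approx : ∀ φ ∈ Γ, ∃ (n : ℕ) (v : Fin n → (Y →L[ℝ] ℝ)) (c : Fin n → ℝ),
    (∀ k, v k ∈ V) ∧ (∑ k, |c k|) ≤ 1 ∧ ‖φ.comp F - ∑ k, c k • v k‖ < μ
  abs_apply_e_sub_one_le : ∀ φ ∈ V, |φ e - 1| ≤ μ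

theorem abs_sum_smul_apply_sub_le {ι : Type*} [Fintype ι] {v : ι → Y →L[ℝ] ℝ} {c : ι → ℝ}
    (hc : ∑ k, |c k| ≤ 1) {u : Y} {a δ : ℝ} (hδ : 0 ≤ δ) (h : ∀ k, |v k u - a| ≤ δ) :
    |(∑ k, c k • v k) u - (∑ k, c k) * a| ≤ δ := by
  have hsum : (∑ k, c k • v k) u - (∑ k, c k) * a = ∑ k, c k * (v k u - a) := by
    simp [Finset.sum_mul, mul_sub]
  calc |(∑ k, c k • v k) u - (∑ k, c k) * a| ≤ ∑ k, |c k| * δ := by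
        rw [hsum]
        refine (Finset.abs_sum_le_sum_abs _ _).trans (Finset.sum_le_sum fun k _ => ?_)
        rw [abs_mul]
        exact mul_le_mul_of_nonneg_left (h k) (abs_nonneg _)
    _ = (∑ k, |c k|) * δ := (Finset.sum_mul ..).symm
    _ ≤ δ := mul_le_of_le_one_left hδ hc

variable {Γ V : Set (Y →L[ℝ] ℝ)} {ρ μ : ℝ} {y₁ φ : Y →L[ℝ] ℝ} {e : Y} {F : Y →L[ℝ] Y}

theorem IsACKWitness.exists_coeff (hW : IsACKWitness Γ ρ μ V y₁ e F) (hφ : φ ∈ Γ) :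
    ∃ l : ℝ, |φ (F e) - l| ≤ 2 * μ ∧
      ∀ (u : Y) (a δ : ℝ), (∀ v ∈ V, |v u - a| ≤ δ) → |φ (F u) - l * a| ≤ μ * ‖u‖ + δ := by
  obtain ⟨n, v, c, hv, hc, happrox⟩ := hW.approx φ hφ
  have key : ∀ (u : Y) (a δ : ℝ), (∀ v ∈ V, |v u - a| ≤ δ) →
      |φ (F u) - (∑ k, c k) * a| ≤ μ * ‖u‖ + δ := by
    intro u a δ h
    have hδ : 0 ≤ δ := (abs_nonneg _).trans (h y₁ hW.mem)
    have happ : |φ (F u) - (∑ k, c k • v k) u| ≤ μ * ‖u‖ := by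
      simpa using (φ.comp F - ∑ k, c k • v k).le_of_opNorm_le happrox.le u
    calc |φ (F u) - (∑ k, c k) * a|
        ≤ |φ (F u) - (∑ k, c k • v k) u| + |(∑ k, c k • v k) u - (∑ k, c k) * a| :=
          abs_sub_le _ _ _
      _ ≤ μ * ‖u‖ + δ := add_le_add happ (abs_sum_smul_apply_sub_le hc hδ fun k => h _ (hv k))
  refine ⟨∑ k, c k, ?_, key⟩
  simpa [hW.norm_e, two_mul] using key e 1 μ hW.abs_apply_e_sub_one_le

/-- The linear map `(a, u) ↦ a F(e) + t (u - F u)`; composed with `(g, T)` it is the paper's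
perturbation `S = g ⊗ F(e) + (1 - ε)(T - F ∘ T)` of `T`. -/
def ackMap (F : Y →L[ℝ] Y) (e : Y) (t a : ℝ) (u : Y) : Y := a • F e + t • (u - F u)

variable {t a : ℝ} {u : Y}

theorem ackMap_sub_ackMap (a' : ℝ) (u' : Y) :
    ackMap F e t a u - ackMap F e t a' u' = ackMap F e t (a - a') (u - u') := by
  simp only [ackMap, map_sub]
  module

theorem apply_ackMap (φ : Y →L[ℝ] ℝ) :
    φ (ackMap F e t a u) = a * φ (F e) + t * (φ u - φ (F u)) := by
  simp [ackMap]

theorem abs_apply_ackMap_le (ht : 0 ≤ t) (he : ‖e‖ ≤ 1) :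
    |φ (ackMap F e t a u)| ≤ |a| * ‖φ.comp F‖ + t * (‖φ - φ.comp F‖ * ‖u‖) := by
  have hFe : |φ (F e)| ≤ ‖φ.comp F‖ := by simpa using (φ.comp F).le_opNorm_of_le he
  have hu : |φ u - φ (F u)| ≤ ‖φ - φ.comp F‖ * ‖u‖ := by simpa using (φ - φ.comp F).le_opNorm u
  rw [apply_ackMap]
  calc |a * φ (F e) + t * (φ u - φ (F u))|
      ≤ |a| * |φ (F e)| + t * |φ u - φ (F u)| := by
        simpa [abs_mul, abs_of_nonneg ht] using abs_add_le (a * φ (F e)) (t * (φ u - φ (F u)))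
    _ ≤ |a| * ‖φ.comp F‖ + t * (‖φ - φ.comp F‖ * ‖u‖) := by gcongr

variable {B θ D : ℝ}

theorem IsACKWitness.abs_apply_ackMap_le_of_one_lt (hΓ : IsOneNorming Γ)
    (hW : IsACKWitness Γ ρ μ V y₁ e F) (hφ : φ ∈ Γ)
    (hV₁ : 1 < ‖φ.comp F‖ + (1 - μ) * ‖φ - φ.comp F‖) (hu : ‖u‖ ≤ D)
    (hflat : ∀ v ∈ V, |v u - y₁ u| ≤ B * D) (hay : |a - y₁ u| ≤ θ * D) (ht0 : 0 ≤ t)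
    (ht1 : t ≤ 1) (hnum : ρ * θ + 3 * μ + B + (1 - t) * ρ + t ≤ 1) :
    |φ (ackMap F e t a u)| ≤ D := by
  obtain ⟨l, hl, hlu⟩ := hW.exists_coeff hφ
  set X := φ (F e)
  have hX : |X| ≤ ρ := hW.abs_apply_le φ hφ hV₁
  have hμ : 0 ≤ μ := (abs_nonneg _).trans (hW.abs_apply_e_sub_one_le y₁ hW.mem)
  have hD : 0 ≤ D := (norm_nonneg u).trans hu
  have hy : |y₁ u| ≤ D := (hΓ.abs_apply_le (hW.subset hW.mem) u).trans hu
  have hP : |φ u| ≤ D := (hΓ.abs_apply_le hφ u).trans hu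
  have hQ : |φ (F u) - l * y₁ u| ≤ (μ + B) * D := by
    have := hlu u (y₁ u) (B * D) hflat
    nlinarith [mul_le_mul_of_nonneg_left hu hμ]
  have hXl : |X - t * l| ≤ 2 * μ + (1 - t) * ρ := by
    calc |X - t * l| = |t * (X - l) + (1 - t) * X| := by ring_nf
      _ ≤ t * (2 * μ) + (1 - t) * ρ := by
        refine (abs_add_le _ _).trans ?_
        rw [abs_mul, abs_mul, abs_of_nonneg ht0, abs_of_nonneg (sub_nonneg.2 ht1)]
        gcongr
      _ ≤ 2 * μ + (1 - t) * ρ := by nlinarith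
  have hsplit : φ (ackMap F e t a u) =
      X * (a - y₁ u) + (X - t * l) * y₁ u + t * φ u - t * (φ (F u) - l * y₁ u) := by
    rw [apply_ackMap]; ring
  have h1 : |X * (a - y₁ u)| ≤ ρ * (θ * D) := by
    rw [abs_mul]; exact mul_le_mul hX hay (abs_nonneg _) ((abs_nonneg _).trans hX)
  have h2 : |(X - t * l) * y₁ u| ≤ (2 * μ + (1 - t) * ρ) * D := by
    rw [abs_mul]; exact mul_le_mul hXl hy (abs_nonneg _) ((abs_nonneg _).trans hXl)
  have h3 : |t * φ u| ≤ t * D := by rw [abs_mul, abs_of_nonneg ht0]; gcongr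
  have h4 : |t * (φ (F u) - l * y₁ u)| ≤ (μ + B) * D := by
    rw [abs_mul, abs_of_nonneg ht0]; nlinarith [abs_nonneg (φ (F u) - l * y₁ u)]
  calc |φ (ackMap F e t a u)|
      ≤ |X * (a - y₁ u)| + |(X - t * l) * y₁ u| + |t * φ u| + |t * (φ (F u) - l * y₁ u)| := by
        rw [hsplit]; exact (abs_sub _ _).trans (add_le_add (abs_add_three _ _ _) le_rfl)
    _ ≤ (ρ * θ + 3 * μ + B + (1 - t) * ρ + t) * D := by linarith
    _ ≤ D := mul_le_of_le_one_left hD hnum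

theorem IsACKWitness.abs_apply_ackMap_le_of_flat (hΓ : IsOneNorming Γ)
    (hW : IsACKWitness Γ ρ μ V y₁ e F) (hφ : φ ∈ Γ) (hu : ‖u‖ ≤ D)
    (hflat : ∀ v ∈ V, |v u - y₁ u| ≤ B * D) (ha : |a| ≤ D) (hay : |a - y₁ u| ≤ θ * D)
    (ht0 : 0 ≤ t) (htμ : t ≤ 1 - μ) (hnum : ρ * θ + 3 * μ + B + (1 - t) * ρ + t ≤ 1) :
    |φ (ackMap F e t a u)| ≤ D := by
  have hμ : 0 ≤ μ := (abs_nonneg _).trans (hW.abs_apply_e_sub_one_le y₁ hW.mem)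
  by_cases hV₁ : 1 < ‖φ.comp F‖ + (1 - μ) * ‖φ - φ.comp F‖
  · exact hW.abs_apply_ackMap_le_of_one_lt hΓ hφ hV₁ hu hflat hay ht0 (by linarith) hnum
  have hD : 0 ≤ D := (norm_nonneg u).trans hu
  calc |φ (ackMap F e t a u)| ≤ |a| * ‖φ.comp F‖ + t * (‖φ - φ.comp F‖ * ‖u‖) :=
        abs_apply_ackMap_le ht0 hW.norm_e.le
    _ ≤ D * ‖φ.comp F‖ + (1 - μ) * (‖φ - φ.comp F‖ * D) := by
        gcongr
        exact ht0.trans htμ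
    _ = (‖φ.comp F‖ + (1 - μ) * ‖φ - φ.comp F‖) * D := by ring
    _ ≤ D := mul_le_of_le_one_left hD (not_lt.1 hV₁)

theorem IsACKWitness.abs_apply_sub_ackMap_le (hΓ : IsOneNorming Γ)
    (hW : IsACKWitness Γ ρ μ V y₁ e F) (hφ : φ ∈ Γ) (hu : ‖u‖ ≤ D)
    (hflat : ∀ v ∈ V, |v u - y₁ u| ≤ B * D) (hay : |a - y₁ u| ≤ θ * D) (ht0 : 0 ≤ t)
    (ht1 : t ≤ 1) : |φ (u - ackMap F e t a u)| ≤ (2 * (1 - t) + 3 * μ + B + θ) * D := by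
  obtain ⟨l, hl, hlu⟩ := hW.exists_coeff hφ
  set X := φ (F e)
  have hX : |X| ≤ 1 := (hΓ.abs_apply_le hφ _).trans hW.norm_apply_e.le
  have hμ : 0 ≤ μ := (abs_nonneg _).trans (hW.abs_apply_e_sub_one_le y₁ hW.mem)
  have hy : |y₁ u| ≤ D := (hΓ.abs_apply_le (hW.subset hW.mem) u).trans hu
  have hP : |φ u| ≤ D := (hΓ.abs_apply_le hφ u).trans hu
  have hQ : |φ (F u) - l * y₁ u| ≤ (μ + B) * D := by
    have := hlu u (y₁ u) (B * D) hflat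
    nlinarith [mul_le_mul_of_nonneg_left hu hμ]
  have htl : |t * l - X| ≤ 2 * μ + (1 - t) := by
    calc |t * l - X| = |t * (l - X) + (1 - t) * (-X)| := by ring_nf
      _ ≤ t * (2 * μ) + (1 - t) * 1 := by
        refine (abs_add_le _ _).trans ?_
        rw [abs_mul, abs_mul, abs_of_nonneg ht0, abs_of_nonneg (sub_nonneg.2 ht1), abs_neg,
          abs_sub_comm]
        gcongr
      _ ≤ 2 * μ + (1 - t) := by nlinarith
  have hsplit : φ (u - ackMap F e t a u) =
      (1 - t) * φ u + t * (φ (F u) - l * y₁ u) + (t * l - X) * y₁ u + X * (y₁ u - a) := by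
    rw [map_sub, apply_ackMap]; ring
  have h1 : |(1 - t) * φ u| ≤ (1 - t) * D := by
    rw [abs_mul, abs_of_nonneg (sub_nonneg.2 ht1)]; gcongr
  have h2 : |t * (φ (F u) - l * y₁ u)| ≤ (μ + B) * D := by
    rw [abs_mul, abs_of_nonneg ht0]; nlinarith [abs_nonneg (φ (F u) - l * y₁ u)]
  have h3 : |(t * l - X) * y₁ u| ≤ (2 * μ + (1 - t)) * D := by
    rw [abs_mul]; exact mul_le_mul htl hy (abs_nonneg _) ((abs_nonneg _).trans htl)
  have h4 : |X * (y₁ u - a)| ≤ θ * D := by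
    rw [abs_mul, abs_sub_comm]; nlinarith [abs_nonneg X, abs_nonneg (a - y₁ u)]
  calc |φ (u - ackMap F e t a u)|
      ≤ |(1 - t) * φ u| + |t * (φ (F u) - l * y₁ u)| + |(t * l - X) * y₁ u| +
          |X * (y₁ u - a)| := by
        rw [hsplit]; exact (abs_add_le _ _).trans (add_le_add (abs_add_three _ _ _) le_rfl)
    _ ≤ (2 * (1 - t) + 3 * μ + B + θ) * D := by linarith

theorem IsACKWitness.apply_ackMap_eq (hW : IsACKWitness Γ ρ μ V y₁ e F) :
    y₁ (ackMap F e t a u) = a := by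
  have hu : y₁ (F u) = y₁ u := congr($(hW.comp_eq) u)
  simp [apply_ackMap, hW.apply_apply_e, hu]

variable {M : Type*} [MetricSpace M] {z : M}

theorem IsACKWitness.exists_attaining_lipNorm_sub_le (hΓ : IsOneNorming Γ)
    (hW : IsACKWitness Γ ρ μ V y₁ e F) {T : M → Y} (hT : IsLip0 z T) (hT1 : lipNorm T ≤ 1)
    (hflat : ∀ v ∈ V, lipNorm (fun x => v (T x) - y₁ (T x)) ≤ B) {g : M → ℝ} (hg : IsLip0 z g)
    (hg1 : lipNorm g = 1) (hgT : lipNorm (fun x => y₁ (T x) - g x) ≤ θ) {r s : M} (hrs : r ≠ s)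
    (hgrs : |g r - g s| = dist r s) (ht0 : 0 ≤ t) (htμ : t ≤ 1 - μ)
    (hnum : ρ * θ + 3 * μ + B + (1 - t) * ρ + t ≤ 1) :
    ∃ S : M → Y, IsLip0 z S ∧ lipNorm S = 1 ∧ ‖S r - S s‖ = dist r s ∧
      lipNorm (fun x => T x - S x) ≤ 2 * (1 - t) + 3 * μ + B + θ := by
  obtain ⟨⟨K, hTK⟩, hTz⟩ := hT
  obtain ⟨⟨K', hgK⟩, hgz⟩ := hg
  have hμ : 0 ≤ μ := (abs_nonneg _).trans (hW.abs_apply_e_sub_one_le y₁ hW.mem)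
  have hy₁ : y₁ ∈ Γ := hW.subset hW.mem
  have hu : ∀ x x', ‖T x - T x'‖ ≤ dist x x' := fun x x' => by
    simpa using norm_sub_le_of_lipNorm_le hTK hT1 x x'
  have hflat' : ∀ x x', ∀ v ∈ V, |v (T x - T x') - y₁ (T x - T x')| ≤ B * dist x x' :=
    fun x x' v hv => by
      simpa [map_sub] using abs_sub_sub_sub_le_of_lipNorm_le (v.lipschitz.comp hTK)
        (y₁.lipschitz.comp hTK) (hflat v hv) x x'
  have ha : ∀ x x', |g x - g x'| ≤ dist x x' := fun x x' => by
    simpa using norm_sub_le_of_lipNorm_le hgK hg1.le x x'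
  have hay : ∀ x x', |g x - g x' - y₁ (T x - T x')| ≤ θ * dist x x' := fun x x' => by
    simpa [map_sub, abs_sub_comm] using
      abs_sub_sub_sub_le_of_lipNorm_le (y₁.lipschitz.comp hTK) hgK hgT x x'
  set S : M → Y := fun x => ackMap F e t (g x) (T x)
  have hS : ∀ x x', ‖S x - S x'‖ ≤ dist x x' := fun x x' =>
    hΓ.norm_le_of_forall dist_nonneg fun φ hφ => by
      rw [ackMap_sub_ackMap]
      exact hW.abs_apply_ackMap_le_of_flat hΓ hφ (hu x x') (hflat' x x') (ha x x') (hay x x')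
        ht0 htμ hnum
  have hSK : LipschitzWith 1 S := LipschitzWith.of_dist_le_mul fun x x' => by
    simpa [dist_eq_norm] using hS x x'
  have hy₁S : ∀ x, y₁ (S x) = g x := fun x => hW.apply_ackMap_eq
  have hSrs : dist r s ≤ ‖S r - S s‖ := by
    rw [← hgrs, ← hy₁S, ← hy₁S, ← map_sub]
    exact hΓ.abs_apply_le hy₁ _
  refine ⟨S, ⟨⟨1, hSK⟩, by simp [S, ackMap, hgz, hTz]⟩,
    lipNorm_eq_one_of_le_dist hSK (lipNorm_le_of_forall zero_le_one (by simpa using hS)) hrs hSrs,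
    (hS r s).antisymm hSrs, ?_⟩
  have hB : 0 ≤ B := (lipNorm_nonneg _).trans (hflat y₁ hW.mem)
  have hθ : 0 ≤ θ := (lipNorm_nonneg _).trans hgT
  refine hΓ.lipNorm_le (by linarith) fun φ hφ x x' => ?_
  rw [sub_sub_sub_comm, ackMap_sub_ackMap]
  exact hW.abs_apply_sub_ackMap_le hΓ hφ (hu x x') (hflat' x x') (hay x x') ht0 (by linarith)

end ACK

theorem ACKWith.exists_isACKWitness_of_isGammaFlat {M Y : Type*} [MetricSpace M]
    [NormedAddCommGroup Y] [NormedSpace ℝ Y] {ρ : ℝ} {Γ : Set (Y →L[ℝ] ℝ)} (hY : ACKWith Y ρ Γ)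
    {T : M → Y} (hT : IsGammaFlat Γ T) {y : Y} {c : ℝ} (hc : 0 ≤ c) (hcy : c < ‖y‖) {μ B : ℝ}
    (hμ : 0 < μ) (hB : 0 < B) :
    ∃ V y₁ e F, IsACKWitness Γ ρ μ V y₁ e F ∧ c < |y₁ y| ∧
      ∀ v ∈ V, lipNorm (fun x => v (T x) - y₁ (T x)) < B := by
  obtain ⟨φ₀, hφ₀, hcφ₀⟩ := hY.1.exists_lt_abs_apply hc hcy
  obtain ⟨W, hW, hWc, hWΓ, hWdiam⟩ :=
    hT _ (isWeakStarOpen_setOf_lt_abs_apply c y) ⟨φ₀, hcφ₀, hφ₀⟩ B hB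
  obtain ⟨V, hVW, -, y₁, hy₁, e, he, F, hFe, -, hy₁Fe, hy₁F, hρ, happrox, he1⟩ :=
    hY.2 μ hμ (W ∩ Γ) hWΓ inter_subset_right ⟨W, hW, rfl⟩
  refine ⟨V, y₁, e, F, ⟨fun φ hφ => (hVW hφ).2, hy₁, he, hFe, hy₁Fe, hy₁F,
    fun φ hφ h => hρ φ hφ fun h' => h.not_ge h'.2, happrox, he1⟩, hWc (hVW hy₁).1,
    fun v hv => hWdiam v (hVW hv) y₁ (hVW hy₁)⟩

/-- Normalizing `f` moves it by `1 - ‖f‖_L < η`. -/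
theorem LipBPBMolWith.exists_of_lipNorm_le_one {M : Type*} [MetricSpace M] {z : M}
    {ηM : ℝ → ℝ} (hM : LipBPBMolWith z ηM) {B η : ℝ} (hB : 0 < B) (hηM : η ≤ ηM B) (hη : η < 1)
    {f : M → ℝ} (hf : IsLip0 z f) (hf1 : lipNorm f ≤ 1) {p q : M} (hpq : p ≠ q)
    (hfpq : (1 - η) * dist p q < |f p - f q|) :
    ∃ g : M → ℝ, IsLip0 z g ∧ lipNorm g = 1 ∧ ∃ r s : M, r ≠ s ∧ |g r - g s| = dist r s ∧
      lipNorm (fun x => f x - g x) < B + η ∧ molDist z p q r s < B := by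
  obtain ⟨⟨K, hfK⟩, hfz⟩ := hf
  set L := lipNorm f
  have hdpq : 0 < dist p q := dist_pos.2 hpq
  have hL : 1 - η < L := lt_of_mul_lt_mul_right
    (hfpq.trans_le (by simpa using norm_sub_le_lipNorm_mul hfK p q)) hdpq.le
  have hL0 : 0 < L := by linarith
  set fh : M → ℝ := fun x => L⁻¹ • f x
  have hfhK : LipschitzWith (‖L⁻¹‖₊ * K) fh := (lipschitzWith_smul L⁻¹).comp hfK
  have hfh1 : lipNorm fh = 1 := by
    rw [lipNorm_const_smul, abs_of_pos (inv_pos.2 hL0), inv_mul_cancel₀ hL0.ne']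
  have hffh : lipNorm (fun x => f x - fh x) = 1 - L := by
    have : (fun x => f x - fh x) = fun x => (1 - L⁻¹) • f x := by
      ext x; simp only [fh, smul_eq_mul]; ring
    rw [this, lipNorm_const_smul, abs_of_nonpos (by simpa using one_le_inv_iff₀.2 ⟨hL0, hf1⟩)]
    field_simp
    ring
  have hfhpq : |fh p - fh q| > (1 - ηM B) * dist p q := by
    have : |f p - f q| ≤ |fh p - fh q| := by
      rw [← smul_sub, abs_smul, abs_of_pos (inv_pos.2 hL0), smul_eq_mul]
      exact le_mul_of_one_le_left (abs_nonneg _) (one_le_inv_iff₀.2 ⟨hL0, hf1⟩)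
    nlinarith
  obtain ⟨g, ⟨⟨K', hgK⟩, hgz⟩, hg1, r, s, hrs, hgrs, hfhg, hmol⟩ :=
    hM.2 B hB fh ⟨⟨_, hfhK⟩, by simp [fh, hfz]⟩ hfh1 p q hpq hfhpq
  refine ⟨g, ⟨⟨K', hgK⟩, hgz⟩, hg1, r, s, hrs, hgrs, ?_, hmol⟩
  have hsplit : (fun x => f x - g x) = fun x => (f x - fh x) + (fh x - g x) := by
    ext x; ring
  rw [hsplit]
  linarith [lipNorm_add_le (hfK.sub hfhK) (hfhK.sub hgK)]

theorem lipBPB_gammaFlat_of_ACK_general {M Y : Type*} [MetricSpace M]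
    [NormedAddCommGroup Y] [NormedSpace ℝ Y]
    (z : M) (hM : ∃ η : ℝ → ℝ, LipBPBMolWith z η)
    (ρ : ℝ) (hρ0 : 0 ≤ ρ) (hρ1 : ρ < 1)
    (Γ : Set (Y →L[ℝ] ℝ)) (hY : ACKWith Y ρ Γ) :
    ∀ ε > (0 : ℝ), ∃ η > (0 : ℝ),
      ∀ T : M → Y, IsLip0 z T → IsGammaFlat Γ T → lipNorm T = 1 →
        ∀ p q : M, p ≠ q → ‖T p - T q‖ > (1 - η) * dist p q →
          ∃ Sm : M → Y, IsLip0 z Sm ∧ lipNorm Sm = 1 ∧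
            ∃ r s : M, r ≠ s ∧ ‖Sm r - Sm s‖ = dist r s ∧
              molDist z p q r s < ε ∧ lipNorm (fun x => T x - Sm x) < ε := by
  obtain ⟨ηM, hηM⟩ := hM
  intro ε hε
  set εa := min (ε / 8) 1
  -- `8 B = εa (1 - ρ)` pays for the `ρ θ + 4 B + εa ρ ≤ εa` that the perturbation needs
  set B := εa * (1 - ρ) / 8
  have hεa : 0 < εa := lt_min (by linarith) one_pos
  have hεa8 : εa ≤ ε / 8 := min_le_left _ _
  have hεa1 : εa ≤ 1 := min_le_right _ _
  have hB : 0 < B := div_pos (mul_pos hεa (by linarith)) (by norm_num)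
  have hB8 : 8 * B = εa - εa * ρ := by ring
  have hεaρ : 0 ≤ εa * ρ := mul_nonneg hεa.le hρ0
  refine ⟨min (ηM B) B, lt_min (hηM.1 B hB) hB, fun T hT hTflat hT1 p q hpq hTpq => ?_⟩
  set η := min (ηM B) B
  have hη : 0 < η := lt_min (hηM.1 B hB) hB
  have hηB : η ≤ B := min_le_right _ _
  obtain ⟨V, y₁, e, F, hW, hy₁pq, hflat⟩ := hY.exists_isACKWitness_of_isGammaFlat hTflat
    (mul_nonneg (by linarith) dist_nonneg) hTpq hB hB
  obtain ⟨K, hTK⟩ := hT.1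
  have hf1 : lipNorm (fun x => y₁ (T x)) ≤ 1 := (lipNorm_comp_le y₁ hTK).trans
    (by rw [hT1, mul_one]; exact hY.1.1 y₁ (hW.subset hW.mem))
  obtain ⟨g, hg, hg1, r, s, hrs, hgrs, hfg, hmol⟩ := hηM.exists_of_lipNorm_le_one (η := η) hB
    (min_le_left _ _) (by linarith) ⟨⟨_, y₁.lipschitz.comp hTK⟩, by simp [hT.2]⟩ hf1 hpq
    (by simpa [map_sub] using hy₁pq)
  have hρB : ρ * (B + η) ≤ B + η := mul_le_of_le_one_left (by linarith) hρ1.le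
  obtain ⟨S, hS, hS1, hSrs, hTS⟩ := hW.exists_attaining_lipNorm_sub_le (t := 1 - εa) hY.1 hT
    hT1.le (fun v hv => (hflat v hv).le) hg hg1 hfg.le hrs hgrs
    (by linarith) (by linarith) (by linarith)
  exact ⟨S, hS, hS1, r, s, hrs, hSrs, hmol.trans (by linarith), hTS.trans_lt (by linarith)⟩

/-- If `(M, ℝ)` has the Lip-BPB property (in molecular form) and `Y ∈ ACK_ρ` witnessed by the
1-norming set `Γ`, then for every `ε > 0` there is `η > 0` such that every norm-one `Γ`-flat
`T ∈ Lip₀(M,Y)` almost attaining its norm at a pair of distinct points can be `ε`-approximated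
by a norm-one `S` strongly attaining its norm at a pair whose molecule is `ε`-close. -/
theorem lipBPB_gammaFlat_of_ACK {M Y : Type*} [MetricSpace M] [CompleteSpace M]
    [NormedAddCommGroup Y] [NormedSpace ℝ Y] [CompleteSpace Y]
    (z : M) (hM : ∃ η : ℝ → ℝ, LipBPBMolWith z η)
    (ρ : ℝ) (hρ0 : 0 ≤ ρ) (hρ1 : ρ < 1)
    (Γ : Set (Y →L[ℝ] ℝ)) (hY : ACKWith Y ρ Γ) :
    ∀ ε > (0 : ℝ), ∃ η > (0 : ℝ),
      ∀ T : M → Y, IsLip0 z T → IsGammaFlat Γ T → lipNorm T = 1 →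
        ∀ p q : M, p ≠ q → ‖T p - T q‖ > (1 - η) * dist p q →
          ∃ Sm : M → Y, IsLip0 z Sm ∧ lipNorm Sm = 1 ∧
            ∃ r s : M, r ≠ s ∧ ‖Sm r - Sm s‖ = dist r s ∧
              molDist z p q r s < ε ∧ lipNorm (fun x => T x - Sm x) < ε :=
  lipBPB_gammaFlat_of_ACK_general z hM ρ hρ0 hρ1 Γ hY
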